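/- arXiv:1111.3834 — 2 statements merged into one kernel-verified Lean document; each statement's English description precedes it below -/
import Mathlib

section
/- The thermo-majorization curve is well defined: for any probability distribution p on Fin n and any two β-orderings π and π′ of p, the piecewise-linear functions on [0, Z] built from the points (Σ_{i<k} exp(−β E_{π(i)}), Σ_{i<k} p_{π(i)}) and from the points (Σ_{i<k} exp(−β E_{π′(i)}), Σ_{i<k} p_{π′(i)}), k = 0,…,n, are equal. -/
open Finset

/-- A probability distribution on a finite type. -/
def IsProbDist {ι : Type*} [Fintype ι] (p : ι → ℝ) : Prop :=
  (∀ i, 0 ≤ p i) ∧ ∑ i, p i = 1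

/-- A (column-)stochastic matrix: nonnegative entries, each column sums to 1.
It acts on probability vectors by `(G.mulVec p) j = ∑ i, G j i * p i`. -/
def IsStochastic {ι : Type*} [Fintype ι] (G : Matrix ι ι ℝ) : Prop :=
  (∀ i j, 0 ≤ G i j) ∧ ∀ j, ∑ i, G i j = 1

/-- The partition function `Z = ∑ i, exp (-β E i)`. -/
noncomputable def partZ {ι : Type*} [Fintype ι] (β : ℝ) (E : ι → ℝ) : ℝ :=
  ∑ i, Real.exp (-(β * E i))

/-- The Gibbs distribution `τ i = exp (-β E i) / Z`. -/
noncomputable def gibbs {ι : Type*} [Fintype ι] (β : ℝ) (E : ι → ℝ) : ι → ℝ :=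
  fun i => Real.exp (-(β * E i)) / partZ β E

/-- `π` is a β-ordering of `p`: `k ↦ p (π k) * exp (β * E (π k))` is non-increasing. -/
def IsBetaOrdering {n : ℕ} (β : ℝ) (E : Fin n → ℝ) (p : Fin n → ℝ)
    (π : Equiv.Perm (Fin n)) : Prop :=
  ∀ k l : Fin n, k ≤ l →
    p (π l) * Real.exp (β * E (π l)) ≤ p (π k) * Real.exp (β * E (π k))

/-- The x-coordinate `∑_{i<k} exp (-β E (π i))` of the k-th elbow point. -/
noncomputable def elbowX {n : ℕ} (β : ℝ) (E : Fin n → ℝ) (π : Equiv.Perm (Fin n))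
    (k : ℕ) : ℝ :=
  ∑ i : Fin n, if (i : ℕ) < k then Real.exp (-(β * E (π i))) else 0

/-- The piecewise-linear thermo-majorization curve joining the points
`(∑_{i<k} exp (-β E (π i)), ∑_{i<k} p (π i))` for `k = 0, …, n`, where `π` is a
β-ordering of `p`.  On each segment the slope is `p (π k) * exp (β * E (π k))`. -/
noncomputable def tmCurve {n : ℕ} (β : ℝ) (E : Fin n → ℝ) (p : Fin n → ℝ)
    (π : Equiv.Perm (Fin n)) (x : ℝ) : ℝ :=
  ∑ k : Fin n, p (π k) * Real.exp (β * E (π k)) *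
    max 0 (min x (elbowX β E π ((k : ℕ) + 1)) - elbowX β E π (k : ℕ))

/-- `p` thermo-majorizes `q`: `f_p(x) ≥ f_q(x)` for all `x ∈ [0, Z]`
(for β-orderings of `p` and `q`). -/
def ThermoMajorizes {n : ℕ} (β : ℝ) (E : Fin n → ℝ) (p q : Fin n → ℝ) : Prop :=
  ∀ π σ : Equiv.Perm (Fin n), IsBetaOrdering β E p π → IsBetaOrdering β E q σ →
    ∀ x ∈ Set.Icc (0 : ℝ) (partZ β E), tmCurve β E q σ x ≤ tmCurve β E p π x

namespace TMaux

variable {n : ℕ} (β : ℝ) (E : Fin n → ℝ) (p : Fin n → ℝ)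

noncomputable def slope (i : Fin n) : ℝ := p i * Real.exp (β * E i)
noncomputable def wt (i : Fin n) : ℝ := Real.exp (-(β * E i))

lemma wt_pos (i : Fin n) : 0 < wt β E i := Real.exp_pos _

lemma slope_mul_wt (i : Fin n) : slope β E p i * wt β E i = p i := by
  unfold slope wt
  rw [mul_assoc, ← Real.exp_add]
  ring_nf
  simp

lemma elbowX_zero (π : Equiv.Perm (Fin n)) : elbowX β E π 0 = 0 := by
  simp [elbowX]

lemma elbowX_mono (π : Equiv.Perm (Fin n)) {k l : ℕ} (h : k ≤ l) :
    elbowX β E π k ≤ elbowX β E π l := by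
  apply Finset.sum_le_sum
  intro i _
  split_ifs with h1 h2
  · exact le_refl _
  · omega
  · exact (Real.exp_pos _).le
  · exact le_refl _

lemma elbowX_succ (π : Equiv.Perm (Fin n)) (k : Fin n) :
    elbowX β E π ((k : ℕ) + 1) = elbowX β E π (k : ℕ) + wt β E (π k) := by
  unfold elbowX
  have : ∀ i : Fin n, (if (i : ℕ) < (k : ℕ) + 1 then Real.exp (-(β * E (π i))) else 0)
      = (if (i : ℕ) < (k : ℕ) then Real.exp (-(β * E (π i))) else 0)
        + (if i = k then Real.exp (-(β * E (π i))) else 0) := by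
    intro i
    by_cases he : i = k
    · subst he; simp
    · have hv : (i : ℕ) ≠ (k : ℕ) := fun h => he (Fin.ext h)
      by_cases h1 : (i : ℕ) < (k : ℕ)
      · rw [if_pos (by omega), if_pos h1, if_neg he]; ring
      · rw [if_neg (by omega), if_neg h1, if_neg he]; ring
  rw [Finset.sum_congr rfl (fun i _ => this i), Finset.sum_add_distrib,
    Finset.sum_ite_eq' univ k (fun i => Real.exp (-(β * E (π i))))]
  simp [wt]

lemma elbowX_of_le {π : Equiv.Perm (Fin n)} {m : ℕ} (h : n ≤ m) :
    elbowX β E π m = partZ β E := by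
  unfold elbowX partZ
  rw [show (∑ i, Real.exp (-(β * E i))) = ∑ i, Real.exp (-(β * E (π i))) from
    (Equiv.sum_comp π (fun i => Real.exp (-(β * E i)))).symm]
  apply Finset.sum_congr rfl
  intro i _
  rw [if_pos (lt_of_lt_of_le i.isLt h)]

/-- the length of the k-th segment covered up to `x` -/
noncomputable def seg (π : Equiv.Perm (Fin n)) (x : ℝ) (k : Fin n) : ℝ :=
  max 0 (min x (elbowX β E π ((k : ℕ) + 1)) - elbowX β E π (k : ℕ))

lemma tmCurve_eq (π : Equiv.Perm (Fin n)) (x : ℝ) :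
    tmCurve β E p π x = ∑ k : Fin n, slope β E p (π k) * seg β E π x k := rfl

lemma seg_nonneg (π : Equiv.Perm (Fin n)) (x : ℝ) (k : Fin n) : 0 ≤ seg β E π x k :=
  le_max_left _ _

lemma seg_le_wt (π : Equiv.Perm (Fin n)) (x : ℝ) (k : Fin n) :
    seg β E π x k ≤ wt β E (π k) := by
  apply max_le (wt_pos β E (π k)).le
  have := elbowX_succ β E π k
  have h2 : min x (elbowX β E π ((k : ℕ) + 1)) ≤ elbowX β E π ((k : ℕ) + 1) :=
    min_le_right _ _
  linarith

lemma seg_eq_sub (π : Equiv.Perm (Fin n)) (x : ℝ) (k : Fin n) :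
    seg β E π x k = min x (elbowX β E π ((k : ℕ) + 1)) - min x (elbowX β E π (k : ℕ)) := by
  have hm : elbowX β E π (k : ℕ) ≤ elbowX β E π ((k : ℕ) + 1) :=
    elbowX_mono β E π (Nat.le_succ _)
  unfold seg
  rcases le_total x (elbowX β E π (k : ℕ)) with h | h
  · rw [min_eq_left h, min_eq_left (h.trans hm), max_eq_left (by linarith [min_le_left x (elbowX β E π ((k:ℕ)+1))])]
    · linarith [min_eq_left (h.trans hm)]
  · rw [min_eq_right h]
    rcases le_total x (elbowX β E π ((k : ℕ) + 1)) with h2 | h2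
    · rw [min_eq_left h2, max_eq_right (by linarith)]
    · rw [min_eq_right h2, max_eq_right (by linarith)]

lemma sum_seg (π : Equiv.Perm (Fin n)) {x : ℝ} (hx : 0 ≤ x) (hx' : x ≤ partZ β E) :
    ∑ k : Fin n, seg β E π x k = x := by
  have : ∀ k : Fin n, seg β E π x k
      = (fun m => min x (elbowX β E π m)) ((k : ℕ) + 1)
        - (fun m => min x (elbowX β E π m)) (k : ℕ) :=
    fun k => seg_eq_sub β E π x k
  rw [Finset.sum_congr rfl (fun k _ => this k), Fin.sum_univ_eq_sum_range
    (fun m => (fun m => min x (elbowX β E π m)) (m + 1) - (fun m => min x (elbowX β E π m)) m),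
    Finset.sum_range_sub (fun m => min x (elbowX β E π m))]
  rw [elbowX_zero, elbowX_of_le β E (le_refl n)]
  rw [min_eq_left hx', min_eq_right hx]
  ring


/-- the `k`-th supporting line of the curve, at abscissa `x` -/
noncomputable def lineAt (π : Equiv.Perm (Fin n)) (k : Fin n) (x : ℝ) : ℝ :=
  (∑ j : Fin n, if (j : ℕ) < (k : ℕ) then p (π j) else 0)
    + slope β E p (π k) * (x - elbowX β E π (k : ℕ))

lemma tm_le_line (π : Equiv.Perm (Fin n)) (hπ : IsBetaOrdering β E p π)
    (k : Fin n) {x : ℝ} (hx : 0 ≤ x) (hx' : x ≤ partZ β E) :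
    tmCurve β E p π x ≤ lineAt β E p π k x := by
  rw [← sub_nonneg]
  have hxsum := sum_seg β E π hx hx'
  have key : (∑ j : Fin n, (slope β E p (π j) - slope β E p (π k)) *
          ((if (j : ℕ) < (k : ℕ) then wt β E (π j) else 0) - seg β E π x j))
      = (∑ j : Fin n, if (j : ℕ) < (k : ℕ) then p (π j) else 0)
        + slope β E p (π k) * (∑ j : Fin n, seg β E π x j)
        - slope β E p (π k) * (∑ j : Fin n, if (j : ℕ) < (k : ℕ) then wt β E (π j) else 0)
        - ∑ j : Fin n, slope β E p (π j) * seg β E π x j := by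
    rw [Finset.mul_sum, Finset.mul_sum, ← Finset.sum_add_distrib, ← Finset.sum_sub_distrib,
      ← Finset.sum_sub_distrib]
    apply Finset.sum_congr rfl
    intro j _
    by_cases h : (j : ℕ) < (k : ℕ)
    · rw [if_pos h, if_pos h, ← slope_mul_wt β E p (π j)]; ring
    · rw [if_neg h, if_neg h]; ring
  have expand : lineAt β E p π k x - tmCurve β E p π x
      = ∑ j : Fin n, (slope β E p (π j) - slope β E p (π k)) *
          ((if (j : ℕ) < (k : ℕ) then wt β E (π j) else 0) - seg β E π x j) := by
    rw [tmCurve_eq]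
    unfold lineAt
    rw [show elbowX β E π (k : ℕ)
        = ∑ j : Fin n, (if (j : ℕ) < (k : ℕ) then wt β E (π j) else 0) from rfl]
    nth_rewrite 1 [← hxsum]
    rw [key]
    ring
  rw [expand]
  apply Finset.sum_nonneg
  intro j _
  by_cases h : (j : ℕ) < (k : ℕ)
  · apply mul_nonneg
    · rw [sub_nonneg]
      exact hπ j k (Fin.le_def.mpr h.le)
    · rw [if_pos h, sub_nonneg]
      exact seg_le_wt β E π x j
  · apply mul_nonneg_iff.mpr
    refine Or.inr ⟨?_, ?_⟩
    · rw [sub_nonpos]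
      exact hπ k j (Fin.le_def.mpr (by omega))
    · rw [if_neg h, sub_nonpos]
      exact seg_nonneg β E π x j

lemma tm_eq_line (π : Equiv.Perm (Fin n)) {x : ℝ} (hx : 0 ≤ x) (hx' : x ≤ partZ β E)
    (hn : 0 < n) :
    ∃ k : Fin n, tmCurve β E p π x = lineAt β E p π k x := by
  set S : Finset (Fin n) := univ.filter (fun k => elbowX β E π (k : ℕ) ≤ x) with hS
  have hS0 : (⟨0, hn⟩ : Fin n) ∈ S := by
    simp only [hS, mem_filter, mem_univ, true_and]
    simpa [elbowX_zero β E π] using hx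
  have hSne : S.Nonempty := ⟨_, hS0⟩
  set k := S.max' hSne with hk
  have hk1 : elbowX β E π (k : ℕ) ≤ x := (Finset.mem_filter.mp (S.max'_mem hSne)).2
  have hk2 : ∀ j : Fin n, k < j → x < elbowX β E π (j : ℕ) := by
    intro j hj
    by_contra hc
    push_neg at hc
    have hjS : j ∈ S := Finset.mem_filter.mpr ⟨mem_univ _, hc⟩
    exact absurd (S.le_max' j hjS) (not_le.mpr hj)
  refine ⟨k, ?_⟩
  have hminx : min x (elbowX β E π ((k : ℕ) + 1)) = x := by
    apply min_eq_left
    by_cases h : (k : ℕ) + 1 < n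
    · exact (hk2 ⟨(k : ℕ) + 1, h⟩ (Fin.lt_def.mpr (by simp))).le
    · rw [elbowX_of_le β E (by omega)]; exact hx'
  have hterm : ∀ j : Fin n, slope β E p (π j) * seg β E π x j
      = (if (j : ℕ) < (k : ℕ) then p (π j) else 0)
        + (if j = k then slope β E p (π k) * (x - elbowX β E π (k : ℕ)) else 0) := by
    intro j
    rcases lt_trichotomy (j : ℕ) (k : ℕ) with h | h | h
    · have hje : j ≠ k := fun he => by simp [he] at h
      rw [if_pos h, if_neg hje]
      have h1 : elbowX β E π ((j : ℕ) + 1) ≤ x :=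
        le_trans (elbowX_mono β E π (by omega)) hk1
      unfold seg
      rw [min_eq_right h1, elbowX_succ]
      rw [max_eq_right (by linarith [wt_pos β E (π j)])]
      rw [show elbowX β E π (j:ℕ) + wt β E (π j) - elbowX β E π (j:ℕ) = wt β E (π j) by ring,
        slope_mul_wt β E p (π j), add_zero]
    · have hje : j = k := Fin.ext h
      subst hje
      rw [if_neg (lt_irrefl _), if_pos rfl, zero_add]
      unfold seg
      rw [hminx, max_eq_right (by linarith)]
    · have hje : j ≠ k := fun he => by simp [he] at h
      have hjk : k < j := Fin.lt_def.mpr h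
      rw [if_neg (by omega), if_neg hje]
      have h1 : min x (elbowX β E π ((j : ℕ) + 1)) ≤ elbowX β E π (j : ℕ) :=
        le_trans (min_le_left _ _) (hk2 j hjk).le
      unfold seg
      rw [max_eq_left (by linarith), add_zero, mul_zero]
  rw [tmCurve_eq, Finset.sum_congr rfl (fun j _ => hterm j), Finset.sum_add_distrib,
    Finset.sum_ite_eq' univ k]
  unfold lineAt
  simp

/-- the permutation-independent supporting line of element `i` -/
noncomputable def lineL (x : ℝ) (i : Fin n) : ℝ :=
  (∑ j : Fin n, if slope β E p i < slope β E p j then p j else 0)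
    + slope β E p i * (x - ∑ j : Fin n, if slope β E p i < slope β E p j then wt β E j else 0)

lemma line_eq (π : Equiv.Perm (Fin n)) (hπ : IsBetaOrdering β E p π) (k : Fin n) (x : ℝ) :
    lineAt β E p π k x = lineL β E p x (π k) := by
  have key : ∑ j : Fin n, (if (j : ℕ) < (k : ℕ) then p (π j) - slope β E p (π k) * wt β E (π j) else 0)
      = ∑ i : Fin n, (if slope β E p (π k) < slope β E p i
          then p i - slope β E p (π k) * wt β E i else 0) := by
    rw [← Equiv.sum_comp π (fun i => if slope β E p (π k) < slope β E p i
      then p i - slope β E p (π k) * wt β E i else 0)]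
    apply Finset.sum_congr rfl
    intro j _
    by_cases h1 : (j : ℕ) < (k : ℕ)
    · by_cases h2 : slope β E p (π k) < slope β E p (π j)
      · rw [if_pos h1, if_pos h2]
      · rw [if_pos h1, if_neg h2]
        have hle : slope β E p (π k) ≤ slope β E p (π j) := hπ j k (Fin.le_def.mpr h1.le)
        have heq : slope β E p (π j) = slope β E p (π k) := le_antisymm (not_lt.mp h2) hle
        rw [← heq, ← slope_mul_wt β E p (π j)]; ring
    · by_cases h2 : slope β E p (π k) < slope β E p (π j)
      · exact absurd (hπ k j (Fin.le_def.mpr (by omega))) (not_le.mpr h2)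
      · rw [if_neg h1, if_neg h2]
  unfold lineAt lineL
  have expand1 : ∀ (c : ℝ) (f g : Fin n → ℝ) (P : Fin n → Prop) [DecidablePred P],
      (∑ j, if P j then f j - c * g j else 0)
        = (∑ j, if P j then f j else 0) - c * (∑ j, if P j then g j else 0) := by
    intro c f g P _
    rw [Finset.mul_sum, ← Finset.sum_sub_distrib]
    apply Finset.sum_congr rfl
    intro j _
    split_ifs <;> ring
  rw [expand1, expand1] at key
  have hX : elbowX β E π (k : ℕ) = ∑ j : Fin n, (if (j : ℕ) < (k : ℕ) then wt β E (π j) else 0) := rfl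
  rw [hX]
  linarith [key]

lemma tm_eq_inf (π : Equiv.Perm (Fin n)) (hπ : IsBetaOrdering β E p π)
    {x : ℝ} (hx : 0 ≤ x) (hx' : x ≤ partZ β E) (hn : 0 < n) :
    tmCurve β E p π x
      = (univ : Finset (Fin n)).inf' (⟨⟨0, hn⟩, mem_univ _⟩) (fun i => lineL β E p x i) := by
  apply le_antisymm
  · apply Finset.le_inf'
    intro i _
    have := tm_le_line β E p π hπ (π.symm i) hx hx'
    rwa [line_eq β E p π hπ (π.symm i) x, Equiv.apply_symm_apply] at this
  · obtain ⟨k, hk⟩ := tm_eq_line β E p π hx hx' hn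
    rw [hk, line_eq β E p π hπ k x]
    exact Finset.inf'_le _ (mem_univ (π k))

end TMaux

/-- The thermo-majorization curve is well defined: any two β-orderings
of the same distribution `p` give the same piecewise-linear curve on `[0, Z]`. -/
theorem tmCurve_well_defined {n : ℕ} (β : ℝ) (hβ : 0 < β) (E : Fin n → ℝ)
    (p : Fin n → ℝ) (hp : IsProbDist p) (π π' : Equiv.Perm (Fin n))
    (hπ : IsBetaOrdering β E p π) (hπ' : IsBetaOrdering β E p π') :
    ∀ x ∈ Set.Icc (0 : ℝ) (partZ β E), tmCurve β E p π x = tmCurve β E p π' x := by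
  intro x hx
  rcases Nat.eq_zero_or_pos n with h0 | hn
  · subst h0
    simp [tmCurve]
  · rw [TMaux.tm_eq_inf β E p π hπ hx.1 hx.2 hn,
      TMaux.tm_eq_inf β E p π' hπ' hx.1 hx.2 hn]
end

section
/- Work of formation criterion: let β > 0, let E : Fin n → ℝ have partition function Z and Gibbs distribution τ, let p be a probability distribution on Fin n, and let W ∈ ℝ. Consider the combined system Fin n × Fin 2 (system plus work qubit) with energies (i, w) ↦ E_i + W·w (w ∈ {0,1}) and its associated Gibbs distribution τ_tot. Then there exists a stochastic matrix G on the combined system with G τ_tot = τ_tot and G(τ ⊗ δ_1) = p ⊗ δ_0 if and only if β·W ≥ D_max(p‖τ). (Thus the work of formation is W_form = kT·D_max(p‖τ) = F_max(p) − F_max(τ).) -/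
open Finset

/-- The product distribution `(p ⊗ p') (i, j) = p i * p' j`. -/
def prodDist {ι κ : Type*} (p : ι → ℝ) (p' : κ → ℝ) : ι × κ → ℝ :=
  fun x => p x.1 * p' x.2

/-- The point distribution on `Fin 2` concentrated at `w`. -/
def pointDist (w : Fin 2) : Fin 2 → ℝ := fun x => if x = w then 1 else 0

/-- The energies of system plus work qubit: `(i, w) ↦ E i + W * w`. -/
def workEnergy {n : ℕ} (E : Fin n → ℝ) (W : ℝ) : Fin n × Fin 2 → ℝ :=
  fun x => E x.1 + W * ((x.2 : ℕ) : ℝ)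

/-- The max-relative entropy `D_max(p‖q) = ln (max_{i : p i > 0} p i / q i)`. -/
noncomputable def Dmax {ι : Type*} [Fintype ι] (p q : ι → ℝ) : ℝ :=
  Real.log (sSup {r : ℝ | ∃ i, 0 < p i ∧ r = p i / q i})

/-!
Let `q` be the Gibbs distribution of the work qubit, so that `τ_tot = τ ⊗ q` and
`q 0 = e^{βW} q 1`. A nonnegative matrix fixing `τ_tot` preserves every bound `c • a ≤ τ_tot`.
Since `q 1 • (τ ⊗ δ₁) ≤ τ_tot`, a channel as in the statement gives `q 1 • (p ⊗ δ₀) ≤ τ_tot`,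
i.e. `p ≤ e^{βW} τ`, which is `D_max(p‖τ) ≤ βW`. Conversely, under this bound the
measure-and-prepare channel that prepares `p ⊗ δ₀` when the qubit reads `1`, and the
normalised remainder `(τ_tot - q 1 • (p ⊗ δ₀)) / (1 - q 1)` when it reads `0`, fixes `τ_tot`.
-/

section Distributions

variable {ι κ : Type*} [Fintype ι]

lemma IsProbDist.exists_pos {p : ι → ℝ} (hp : IsProbDist p) : ∃ i, 0 < p i := by
  obtain ⟨i, -, hi⟩ := Finset.exists_lt_of_sum_lt (s := univ) (f := 0) (g := p)
    (by simp [hp.2])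
  exact ⟨i, hi⟩

lemma IsProbDist.prodDist [Fintype κ] {p : ι → ℝ} {p' : κ → ℝ} (hp : IsProbDist p)
    (hp' : IsProbDist p') : IsProbDist (prodDist p p') :=
  ⟨fun x => mul_nonneg (hp.1 x.1) (hp'.1 x.2), by
    simp only [Fintype.sum_prod_type, _root_.prodDist, ← mul_sum, hp'.2, mul_one, hp.2]⟩

lemma isProbDist_pointDist (w : Fin 2) : IsProbDist (pointDist w) :=
  ⟨fun x => by unfold pointDist; split_ifs <;> norm_num, by simp [pointDist]⟩

lemma partZ_pos [Nonempty ι] (β : ℝ) (E : ι → ℝ) : 0 < partZ β E :=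
  sum_pos (fun _ _ => Real.exp_pos _) univ_nonempty

lemma gibbs_pos [Nonempty ι] (β : ℝ) (E : ι → ℝ) (i : ι) : 0 < gibbs β E i :=
  div_pos (Real.exp_pos _) (partZ_pos β E)

lemma isProbDist_gibbs [Nonempty ι] (β : ℝ) (E : ι → ℝ) : IsProbDist (gibbs β E) :=
  ⟨fun i => (gibbs_pos β E i).le, by
    unfold gibbs
    rw [← sum_div, ← partZ, div_self (partZ_pos β E).ne']⟩

lemma gibbs_add_energy [Fintype κ] (β : ℝ) (E₁ : ι → ℝ) (E₂ : κ → ℝ) :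
    gibbs β (fun x : ι × κ => E₁ x.1 + E₂ x.2) = prodDist (gibbs β E₁) (gibbs β E₂) := by
  have hZ : partZ β (fun x : ι × κ => E₁ x.1 + E₂ x.2) = partZ β E₁ * partZ β E₂ := by
    simp only [partZ, Fintype.sum_mul_sum, Fintype.sum_prod_type, mul_add, neg_add,
      Real.exp_add]
  funext x
  simp only [gibbs, prodDist, hZ, mul_add, neg_add, Real.exp_add, mul_div_mul_comm]

end Distributions

lemma Dmax_le_iff {ι : Type*} [Fintype ι] {p q : ι → ℝ} (hp : IsProbDist p)
    (hq : ∀ i, 0 < q i) (r : ℝ) : Dmax p q ≤ r ↔ ∀ i, p i ≤ Real.exp r * q i := by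
  set S := {s : ℝ | ∃ i, 0 < p i ∧ s = p i / q i}
  obtain ⟨i₀, hi₀⟩ := hp.exists_pos
  have hS : S ⊆ Set.range fun i => p i / q i := by rintro s ⟨i, -, rfl⟩; exact ⟨i, rfl⟩
  have hbdd : BddAbove S := ((Set.finite_range _).subset hS).bddAbove
  have hmem : p i₀ / q i₀ ∈ S := ⟨i₀, hi₀, rfl⟩
  have hSpos : 0 < sSup S := (div_pos hi₀ (hq i₀)).trans_le (le_csSup hbdd hmem)
  rw [Dmax, Real.log_le_iff_le_exp hSpos, csSup_le_iff hbdd ⟨_, hmem⟩]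
  refine ⟨fun h i => ?_, fun h s ⟨i, hi, hs⟩ => ?_⟩
  · rcases (hp.1 i).eq_or_lt with hi | hi
    · rw [← hi]; exact (mul_pos (Real.exp_pos r) (hq i)).le
    · exact (div_le_iff₀ (hq i)).1 (h _ ⟨i, hi, rfl⟩)
  · rw [hs, div_le_iff₀ (hq i)]; exact h i

lemma gibbs_eq_exp_mul_gibbs {ι : Type*} [Fintype ι] (β : ℝ) (E : ι → ℝ) (i j : ι) :
    gibbs β E i = Real.exp (β * (E j - E i)) * gibbs β E j := by
  simp only [gibbs, mul_div_assoc', ← Real.exp_add]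
  ring_nf

lemma mul_prodDist_pointDist_le_iff {ι : Type*} {p τ : ι → ℝ} {q : Fin 2 → ℝ} {c : ℝ}
    {w : Fin 2} (hτ : ∀ i, 0 ≤ τ i) (hq : ∀ v, 0 ≤ q v) :
    (∀ x, c * prodDist p (pointDist w) x ≤ prodDist τ q x) ↔ ∀ i, c * p i ≤ τ i * q w := by
  refine ⟨fun h i => by simpa [prodDist, pointDist] using h (i, w), ?_⟩
  rintro h ⟨i, v⟩
  by_cases hv : v = w
  · subst hv; simpa [prodDist, pointDist] using h i
  · simpa [prodDist, pointDist, hv] using mul_nonneg (hτ i) (hq v)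

section Stochastic

open scoped Matrix

variable {ι : Type*} [Fintype ι]

lemma mul_mulVec_le_of_mul_le {G : Matrix ι ι ℝ} (hG : ∀ i j, 0 ≤ G i j) {t a : ι → ℝ}
    (hfix : G *ᵥ t = t) {c : ℝ} (ha : ∀ x, c * a x ≤ t x) (x : ι) :
    c * (G *ᵥ a) x ≤ t x :=
  calc c * (G *ᵥ a) x = ∑ y, G x y * (c * a y) := by
        simp only [Matrix.mulVec, dotProduct, mul_sum]; ring_nf
    _ ≤ ∑ y, G x y * t y := sum_le_sum fun y _ => mul_le_mul_of_nonneg_left (ha y) (hG x y)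
    _ = t x := congrFun hfix x

variable [DecidableEq ι]

lemma mulVec_of_ite_mem (A : Finset ι) (u v f : ι → ℝ) :
    Matrix.of (fun x y => if y ∈ A then u x else v x) *ᵥ f =
      fun x => u x * ∑ y ∈ A, f y + v x * ∑ y ∈ Aᶜ, f y := by
  funext x
  simp only [Matrix.mulVec, dotProduct, Matrix.of_apply, ite_mul, sum_ite, mul_sum]
  simp [compl_eq_univ_sdiff, filter_not]

lemma exists_stochastic_fix_map {t a b : ι → ℝ} (A : Finset ι) (ht : IsProbDist t)
    (ha : IsProbDist a) (hb : IsProbDist b) (haA : ∀ x ∉ A, a x = 0)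
    (hA : ∑ y ∈ A, t y < 1) (hbt : ∀ x, (∑ y ∈ A, t y) * b x ≤ t x) :
    ∃ G : Matrix ι ι ℝ, IsStochastic G ∧ G *ᵥ t = t ∧ G *ᵥ a = b := by
  set ε := ∑ y ∈ A, t y
  have hε : 1 - ε ≠ 0 := (sub_pos.2 hA).ne'
  set s : ι → ℝ := fun x => (t x - ε * b x) / (1 - ε)
  have hs : IsProbDist s :=
    ⟨fun x => div_nonneg (sub_nonneg.2 (hbt x)) (sub_pos.2 hA).le, by
      rw [← sum_div, sum_sub_distrib, ← mul_sum, ht.2, hb.2, mul_one, div_self hε]⟩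
  have htA : ∑ y ∈ Aᶜ, t y = 1 - ε := by rw [← ht.2, ← sum_compl_add_sum A]; ring
  have haAc : ∑ y ∈ Aᶜ, a y = 0 := sum_eq_zero fun y hy => haA y (mem_compl.1 hy)
  have haA1 : ∑ y ∈ A, a y = 1 := by rw [← ha.2, ← sum_compl_add_sum A, haAc, zero_add]
  refine ⟨Matrix.of fun x y => if y ∈ A then b x else s x, ⟨fun x y => ?_, fun y => ?_⟩, ?_, ?_⟩
  · simp only [Matrix.of_apply]; split_ifs
    exacts [hb.1 x, hs.1 x]
  · simp only [Matrix.of_apply]; split_ifs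
    exacts [hb.2, hs.2]
  · rw [mulVec_of_ite_mem, htA]
    funext x
    simp only [s]
    field_simp
    ring
  · rw [mulVec_of_ite_mem, haAc, haA1]
    simp

end Stochastic

theorem work_of_formation_iff_general {n : ℕ} (β : ℝ) (E : Fin n → ℝ)
    (p : Fin n → ℝ) (hp : IsProbDist p) (W : ℝ) :
    (∃ G : Matrix (Fin n × Fin 2) (Fin n × Fin 2) ℝ, IsStochastic G ∧
        G.mulVec (gibbs β (workEnergy E W)) = gibbs β (workEnergy E W) ∧
        G.mulVec (prodDist (gibbs β E) (pointDist 1)) = prodDist p (pointDist 0)) ↔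
      Dmax p (gibbs β E) ≤ β * W := by
  have : Nonempty (Fin n) := let ⟨i, _⟩ := hp.exists_pos; ⟨i⟩
  set τ := gibbs β E
  set Ew : Fin 2 → ℝ := fun w => W * ((w : ℕ) : ℝ)
  set q := gibbs β Ew
  have hτ : IsProbDist τ := isProbDist_gibbs β E
  have hq : IsProbDist q := isProbDist_gibbs β Ew
  have hq1 : 0 < q 1 := gibbs_pos β Ew 1
  have hq01 : q 0 = Real.exp (β * W) * q 1 :=
    (gibbs_eq_exp_mul_gibbs β Ew 0 1).trans (by simp [Ew, q])
  have hqA : ∑ x ∈ univ ×ˢ {1}, prodDist τ q x = q 1 := by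
    simp [prodDist, ← sum_mul, hτ.2]
  have hcrit : (∀ i, p i ≤ Real.exp (β * W) * τ i) ↔
      ∀ x, q 1 * prodDist p (pointDist 0) x ≤ prodDist τ q x := by
    rw [mul_prodDist_pointDist_le_iff hτ.1 hq.1, hq01]
    refine forall_congr' fun i => ?_
    rw [mul_comm (q 1), ← mul_assoc, mul_comm (τ i), mul_le_mul_iff_left₀ hq1]
  rw [show gibbs β (workEnergy E W) = prodDist τ q from gibbs_add_energy β E Ew,
    Dmax_le_iff hp (gibbs_pos β E), hcrit]
  constructor
  · rintro ⟨G, hG, hfix, hmap⟩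
    rw [← hmap]
    exact mul_mulVec_le_of_mul_le hG.1 hfix
      ((mul_prodDist_pointDist_le_iff hτ.1 hq.1).2 fun i => (mul_comm _ _).le)
  · intro h
    refine exists_stochastic_fix_map (univ ×ˢ {1}) (hτ.prodDist hq)
      (hτ.prodDist (isProbDist_pointDist 1)) (hp.prodDist (isProbDist_pointDist 0)) ?_ ?_ ?_
    · rintro ⟨i, w⟩ hw
      simp only [mem_product, mem_univ, mem_singleton, true_and] at hw
      simp [prodDist, pointDist, hw]
    · rw [hqA]
      linarith [hq.2, Fin.sum_univ_two q, gibbs_pos β Ew 0]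
    · rwa [hqA]

/-- **work of formation.** On the combined system `Fin n × Fin 2` with
energies `(i, w) ↦ E i + W * w` and its Gibbs distribution `τ_tot`, there is a
Gibbs-preserving stochastic matrix mapping `τ ⊗ δ₁` to `p ⊗ δ₀` iff
`β * W ≥ D_max(p‖τ)`. -/
theorem work_of_formation_iff {n : ℕ} (β : ℝ) (hβ : 0 < β) (E : Fin n → ℝ)
    (p : Fin n → ℝ) (hp : IsProbDist p) (W : ℝ) :
    (∃ G : Matrix (Fin n × Fin 2) (Fin n × Fin 2) ℝ, IsStochastic G ∧
        G.mulVec (gibbs β (workEnergy E W)) = gibbs β (workEnergy E W) ∧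
        G.mulVec (prodDist (gibbs β E) (pointDist 1)) = prodDist p (pointDist 0)) ↔
      Dmax p (gibbs β E) ≤ β * W :=
  work_of_formation_iff_general β E p hp W
end
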